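/- Let 0 < ε < 1, let M ∈ ℝ^{m×n}, and let Ω ∈ ℝ^{d×m} be an ε-embedding of range(M). Let Π be an n×n permutation matrix, fix 1 ≤ k ≤ n, and assume the first k columns of MΠ are linearly independent. Let MΠ = QR be a partial QR factorization with block size k and blocks R₁₁ (invertible), R₁₂, R₂₂, and let ΩMΠ = Q^sk R^sk be a partial QR factorization with block size k and blocks R₁₁^sk (invertible), R₁₂^sk, R₂₂^sk. Then ρ(R,k) ≤ √((1+ε)/(1−ε)) · ρ(R^sk,k). -/

import Mathlib

open Matrix

/-- Euclidean (ℓ₂) norm of a vector in `ℝ^m`. -/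
noncomputable def norm2 {m : ℕ} (x : Fin m → ℝ) : ℝ := Real.sqrt (x ⬝ᵥ x)

/-- `Ω` is an `ε`-embedding of the subspace `V ⊆ ℝ^m`:
`|⟨Ωx, Ωy⟩ − ⟨x, y⟩| ≤ ε‖x‖₂‖y‖₂` for all `x, y ∈ V`. -/
def IsEmbedding {d m : ℕ} (ε : ℝ) (Ω : Matrix (Fin d) (Fin m) ℝ)
    (V : Submodule ℝ (Fin m → ℝ)) : Prop :=
  ∀ x ∈ V, ∀ y ∈ V, |(Ω.mulVec x) ⬝ᵥ (Ω.mulVec y) - x ⬝ᵥ y| ≤ ε * norm2 x * norm2 y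

theorem Matrix.isHermitian_transpose_mul_self {m n : Type*} [Fintype m]
    (A : Matrix m n ℝ) : (Aᵀ * A).IsHermitian := by
  simpa [Matrix.conjTranspose_eq_transpose_of_trivial] using
    Matrix.isHermitian_conjTranspose_mul_self A

/-- The `i`-th largest singular value (`0`-indexed) of a real matrix `A`:
the square root of the `i`-th largest eigenvalue of `AᵀA`. -/
noncomputable def singularValues {m n : ℕ} (A : Matrix (Fin m) (Fin n) ℝ) (i : Fin n) : ℝ :=
  Real.sqrt ((Matrix.isHermitian_transpose_mul_self A).eigenvalues
    (Tuple.sort (Matrix.isHermitian_transpose_mul_self A).eigenvalues i.rev))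

/-- `P` is a permutation matrix. -/
def IsPermMatrix {n : ℕ} (P : Matrix (Fin n) (Fin n) ℝ) : Prop :=
  ∃ σ : Equiv.Perm (Fin n), P = σ.permMatrix ℝ

/-- `A = Q * [[R₁₁, R₁₂], [0, R₂₂]]` is a partial QR factorization with block size `k`,
where `A` is `(k+m') × (k+n')`, `Q` is orthogonal and `R₁₁` is `k × k` upper triangular. -/
def PartialQR {k m' n' : ℕ} (A : Matrix (Fin (k + m')) (Fin (k + n')) ℝ)
    (Q : Matrix (Fin (k + m')) (Fin (k + m')) ℝ)
    (R11 : Matrix (Fin k) (Fin k) ℝ) (R12 : Matrix (Fin k) (Fin n') ℝ)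
    (R22 : Matrix (Fin m') (Fin n') ℝ) : Prop :=
  Qᵀ * Q = 1 ∧ (∀ i j : Fin k, (j : ℕ) < (i : ℕ) → R11 i j = 0) ∧
    A = Q * (Matrix.reindex finSumFinEquiv finSumFinEquiv (Matrix.fromBlocks R11 R12 0 R22))

/-- `ω_i(A)`: the ℓ₂-norm of the `i`-th row of `A⁻¹`. -/
noncomputable def omega_ {k : ℕ} (A : Matrix (Fin k) (Fin k) ℝ) (i : Fin k) : ℝ :=
  norm2 (fun l => A⁻¹ i l)

/-- `γ_j(B)`: the ℓ₂-norm of the `j`-th column of `B`. -/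
noncomputable def gamma_ {p q : ℕ} (B : Matrix (Fin p) (Fin q) ℝ) (j : Fin q) : ℝ :=
  norm2 (fun l => B l j)

/-- `ρ(R, k)` for `R = [[R₁₁, R₁₂], [0, R₂₂]]`:
`max_{i,j} sqrt(((R₁₁⁻¹R₁₂)_{i,j})² + ω_i(R₁₁)²·γ_j(R₂₂)²)`. -/
noncomputable def rho {k m' n' : ℕ} (R11 : Matrix (Fin k) (Fin k) ℝ)
    (R12 : Matrix (Fin k) (Fin n') ℝ) (R22 : Matrix (Fin m') (Fin n') ℝ) : ℝ :=
  ⨆ i : Fin k, ⨆ j : Fin n',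
    Real.sqrt (((R11⁻¹ * R12) i j) ^ 2 + (omega_ R11 i) ^ 2 * (gamma_ R22 j) ^ 2)

/-- The volume of `A ∈ ℝ^{m×n}`: `V(A) = sqrt(det(AᵀA))`. -/
noncomputable def vol {m n : ℕ} (A : Matrix (Fin m) (Fin n) ℝ) : ℝ :=
  Real.sqrt (Matrix.det (Aᵀ * A))

/-- The angle between two vectors: `arccos(⟨u,w⟩/(‖u‖₂‖w‖₂))`. -/
noncomputable def angleVec {m : ℕ} (u w : Fin m → ℝ) : ℝ :=
  Real.arccos ((u ⬝ᵥ w) / (norm2 u * norm2 w))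

/-- The angle between a vector and a subspace:
`arccos( max over nonzero u ∈ K of ⟨v,u⟩/(‖v‖₂‖u‖₂) )`. -/
noncomputable def angleSub {m : ℕ} (v : Fin m → ℝ) (K : Submodule ℝ (Fin m → ℝ)) : ℝ :=
  Real.arccos (sSup {c : ℝ | ∃ u ∈ K, u ≠ 0 ∧ c = (v ⬝ᵥ u) / (norm2 v * norm2 u)})

/-- `P` is the orthogonal projector onto the subspace `K` (w.r.t. the dot product). -/
def IsOrthProj {m : ℕ} (K : Submodule ℝ (Fin m → ℝ))
    (P : (Fin m → ℝ) →ₗ[ℝ] (Fin m → ℝ)) : Prop :=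
  (∀ v, P v ∈ K) ∧ (∀ u ∈ K, P u = u) ∧ (∀ v, ∀ u ∈ K, (v - P v) ⬝ᵥ u = 0)

/-- Thin QR factorization `A = Q R` with `Q ∈ ℝ^{m×k}` having orthonormal columns and
`R ∈ ℝ^{k×k}` upper triangular. -/
def ThinQR {m k : ℕ} (A Q : Matrix (Fin m) (Fin k) ℝ) (R : Matrix (Fin k) (Fin k) ℝ) : Prop :=
  Qᵀ * Q = 1 ∧ (∀ a b : Fin k, (b : ℕ) < (a : ℕ) → R a b = 0) ∧ A = Q * R

/-- Frobenius norm of a real matrix. -/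
noncomputable def frobNorm {p q : ℕ} (A : Matrix (Fin p) (Fin q) ℝ) : ℝ :=
  Real.sqrt (∑ i, ∑ j, A i j ^ 2)

/-- Spectral norm of a real matrix: sup of `‖Ax‖₂` over the unit ball. -/
noncomputable def specNorm {p q : ℕ} (A : Matrix (Fin p) (Fin q) ℝ) : ℝ :=
  sSup {r : ℝ | ∃ x : Fin q → ℝ, norm2 x ≤ 1 ∧ r = norm2 (A.mulVec x)}

lemma scalarCS (t a b A B : ℝ) (hA : 0 ≤ A) (hB : 0 ≤ B) (ht : t^2 ≤ A*B) :
    (t + a*b)^2 ≤ (A + a^2)*(B + b^2) := by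
  rcases eq_or_lt_of_le hA with h0 | h0
  · have ht0 : t = 0 := by nlinarith
    subst ht0
    nlinarith [sq_nonneg a, sq_nonneg b, mul_nonneg (sq_nonneg a) hB]
  · nlinarith [mul_nonneg (le_of_lt h0) (sub_nonneg.2 ht), sq_nonneg (A*b - t*a),
      mul_nonneg (sq_nonneg a) (sub_nonneg.2 ht), h0]

lemma dot_self_nonneg' {n : ℕ} (x : Fin n → ℝ) : 0 ≤ x ⬝ᵥ x :=
  Finset.sum_nonneg fun _ _ => mul_self_nonneg _

lemma dotCS {n : ℕ} (x y : Fin n → ℝ) : (x ⬝ᵥ y)^2 ≤ (x ⬝ᵥ x) * (y ⬝ᵥ y) := by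
  have h := Finset.sum_mul_sq_le_sq_mul_sq Finset.univ x y
  simpa [dotProduct, pow_two] using h

lemma core {k : ℕ} {ε : ℝ} (hε0 : 0 < ε) (hε1 : ε < 1)
    (P S : Matrix (Fin k) (Fin k) ℝ) (hP : IsUnit P.det) (hS : IsUnit S.det)
    (p q : Fin k → ℝ) (g2 h2 : ℝ) (hg2 : 0 ≤ g2) (hh2 : 0 ≤ h2)
    (hE : ∀ (v : Fin k → ℝ) (t : ℝ),
      |((S *ᵥ v + t • q) ⬝ᵥ (S *ᵥ v + t • q) + t^2 * h2) -
        ((P *ᵥ v + t • p) ⬝ᵥ (P *ᵥ v + t • p) + t^2 * g2)| ≤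
        ε * ((P *ᵥ v + t • p) ⬝ᵥ (P *ᵥ v + t • p) + t^2 * g2))
    (i : Fin k) :
    Real.sqrt (((P⁻¹ *ᵥ p) i)^2 + ((fun l => P⁻¹ i l) ⬝ᵥ (fun l => P⁻¹ i l)) * g2) ≤
      Real.sqrt ((1+ε)/(1-ε)) *
      Real.sqrt (((S⁻¹ *ᵥ q) i)^2 + ((fun l => S⁻¹ i l) ⬝ᵥ (fun l => S⁻¹ i l)) * h2) := by
  have h1ε : 0 < 1 - ε := by linarith
  have hKnn : (0:ℝ) ≤ (1+ε)/(1-ε) := by positivity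
  set s : Fin k → ℝ := fun l => P⁻¹ i l with hs
  set t : Fin k → ℝ := fun l => S⁻¹ i l with hts
  set c : ℝ := (P⁻¹ *ᵥ p) i with hc
  set c' : ℝ := (S⁻¹ *ᵥ q) i with hc'
  set ω2 : ℝ := s ⬝ᵥ s with hω2
  set ω2' : ℝ := t ⬝ᵥ t with hω2'
  have hω2nn : 0 ≤ ω2 := dot_self_nonneg' s
  have hω2nn' : 0 ≤ ω2' := dot_self_nonneg' t
  have hPP : P * P⁻¹ = 1 := Matrix.mul_nonsing_inv P hP
  have hPP' : P⁻¹ * P = 1 := Matrix.nonsing_inv_mul P hP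
  have hSS : S * S⁻¹ = 1 := Matrix.mul_nonsing_inv S hS
  have hSS' : S⁻¹ * S = 1 := Matrix.nonsing_inv_mul S hS
  -- Step A : (1-ε) * g2 ≤ h2, and more
  have hA0 : S *ᵥ (-(S⁻¹ *ᵥ q)) + (1:ℝ) • q = 0 := by
    rw [Matrix.mulVec_neg, Matrix.mulVec_mulVec, hSS, Matrix.one_mulVec, one_smul]
    simp
  have hEA := hE (-(S⁻¹ *ᵥ q)) 1
  rw [hA0] at hEA
  set rA : Fin k → ℝ := P *ᵥ (-(S⁻¹ *ᵥ q)) + (1:ℝ) • p with hrA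
  simp only [zero_dotProduct, one_pow, one_mul, zero_add] at hEA
  have hrAnn : 0 ≤ rA ⬝ᵥ rA := dot_self_nonneg' rA
  have habs := abs_le.1 hEA
  have hstepA : (1-ε) * (rA ⬝ᵥ rA + g2) ≤ h2 := by nlinarith [habs.1]
  have hgh : (1-ε) * g2 ≤ h2 := by nlinarith
  rcases eq_or_lt_of_le hh2 with hh0 | hh0
  · -- h2 = 0 case
    have hg0 : g2 = 0 := by nlinarith
    have hrA0 : rA ⬝ᵥ rA = 0 := by nlinarith
    have hrAz : rA = 0 := by
      funext l
      have := Finset.sum_eq_zero_iff_of_nonneg (fun x _ => mul_self_nonneg (rA x)) |>.1 hrA0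
      have h := this l (Finset.mem_univ l)
      exact mul_self_eq_zero.1 h
    have hpeq : p = P *ᵥ (S⁻¹ *ᵥ q) := by
      have : P *ᵥ (-(S⁻¹ *ᵥ q)) + p = 0 := by rw [← one_smul ℝ p]; exact hrAz
      rw [Matrix.mulVec_neg] at this
      funext l
      have := congrFun this l
      simp only [Pi.add_apply, Pi.neg_apply, Pi.zero_apply] at this
      linarith
    have hcc : c = c' := by
      rw [hc, hpeq, Matrix.mulVec_mulVec, hPP', Matrix.one_mulVec, hc']
    rw [hg0, ← hh0, hcc]
    have h1 : Real.sqrt (c'^2 + ω2 * 0) = |c'| := by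
      rw [mul_zero, add_zero, Real.sqrt_sq_eq_abs]
    have h2' : Real.sqrt (c'^2 + ω2' * 0) = |c'| := by
      rw [mul_zero, add_zero, Real.sqrt_sq_eq_abs]
    rw [h1, h2']
    have hK1 : 1 ≤ Real.sqrt ((1+ε)/(1-ε)) := by
      rw [Real.one_le_sqrt, le_div_iff₀ h1ε]; linarith
    nlinarith [abs_nonneg c', hK1]
  · -- 0 < h2
    set D : ℝ := c^2 + ω2 * g2 with hD
    set D' : ℝ := c'^2 + ω2' * h2 with hD'
    have hDnn : 0 ≤ D := add_nonneg (sq_nonneg c) (mul_nonneg hω2nn hg2)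
    have hD'nn : 0 ≤ D' := add_nonneg (sq_nonneg c') (mul_nonneg hω2nn' hh2)
    rcases eq_or_lt_of_le hDnn with hD0 | hD0
    · rw [← hD0, Real.sqrt_zero]
      exact mul_nonneg (Real.sqrt_nonneg _) (Real.sqrt_nonneg _)
    · -- main case
      set X : Fin k → ℝ := P⁻¹ *ᵥ (g2 • s + c • p) with hX
      have key1 : P *ᵥ X + (-c) • p = g2 • s := by
        rw [hX, Matrix.mulVec_mulVec, hPP, Matrix.one_mulVec, neg_smul]
        abel
      have hsp : s ⬝ᵥ p = c := rfl
      have key2 : X i = D := by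
        have : X i = (P⁻¹ *ᵥ (g2 • s) ) i + (P⁻¹ *ᵥ (c • p)) i := by
          rw [hX, Matrix.mulVec_add]; rfl
        rw [this, Matrix.mulVec_smul, Matrix.mulVec_smul]
        have h1 : (P⁻¹ *ᵥ s) i = ω2 := rfl
        have h2'' : (P⁻¹ *ᵥ p) i = c := rfl
        simp only [Pi.smul_apply, smul_eq_mul]
        rw [h1, h2'', hD]
        ring
      have hEX := hE X (-c)
      rw [key1] at hEX
      have hFX : (g2 • s) ⬝ᵥ (g2 • s) + (-c)^2 * g2 = g2 * D := by
        rw [smul_dotProduct, dotProduct_smul]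
        simp only [smul_eq_mul]
        rw [hD]; ring
      rw [hFX] at hEX
      set y : Fin k → ℝ := S *ᵥ X + (-c) • q with hy
      have hF'X : y ⬝ᵥ y + c^2 * h2 ≤ (1+ε) * (g2 * D) := by
        have h := (abs_le.1 hEX).2
        rw [neg_sq] at h
        have hexp : (1+ε) * (g2 * D) = g2 * D + ε * (g2 * D) := by ring
        rw [hexp]
        linarith
      -- key3
      have key3 : t ⬝ᵥ y = D - c * c' := by
        have h1 : t ⬝ᵥ (S *ᵥ X) = X i := by
          have : (S⁻¹ *ᵥ (S *ᵥ X)) i = X i := by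
            rw [Matrix.mulVec_mulVec, hSS', Matrix.one_mulVec]
          exact this
        have h2'' : t ⬝ᵥ ((-c) • q) = -c * c' := by
          rw [dotProduct_smul]
          have : t ⬝ᵥ q = c' := rfl
          rw [this]; simp
        rw [hy, dotProduct_add, h1, h2'', key2]
        ring
      have hynn : 0 ≤ y ⬝ᵥ y := dot_self_nonneg' y
      have hCS : (t ⬝ᵥ y)^2 ≤ ω2' * (y ⬝ᵥ y) := dotCS t y
      set sh : ℝ := Real.sqrt h2 with hsh
      have hsh2 : sh^2 = h2 := Real.sq_sqrt hh2
      have hshpos : 0 < sh := Real.sqrt_pos.2 hh0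
      have hmain : (sh * D)^2 ≤ D' * (y ⬝ᵥ y + c^2 * h2) := by
        have h1 : (sh * (t ⬝ᵥ y))^2 ≤ (h2 * ω2') * (y ⬝ᵥ y) := by
          rw [mul_pow, hsh2]
          have := mul_le_mul_of_nonneg_left hCS hh2
          linarith
        have h2'' := scalarCS (sh * (t ⬝ᵥ y)) c' (sh * c) (h2 * ω2') (y ⬝ᵥ y)
          (mul_nonneg hh2 hω2nn') hynn h1
        have heq : sh * (t ⬝ᵥ y) + c' * (sh * c) = sh * D := by
          rw [key3]; ring
        rw [heq] at h2''
        calc (sh * D)^2 ≤ (h2 * ω2' + c'^2) * (y ⬝ᵥ y + (sh*c)^2) := h2''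
          _ = D' * (y ⬝ᵥ y + c^2 * h2) := by rw [hD']; rw [mul_pow, hsh2]; ring
      -- g2 > 0
      have hg0 : 0 < g2 := by
        rcases eq_or_lt_of_le hg2 with h | h
        · exfalso
          have hFX0 : g2 * D = 0 := by rw [← h, zero_mul]
          rw [hFX0, mul_zero] at hEX
          have h2' := (abs_le.1 hEX).2
          rw [neg_sq] at h2'
          have hch : c^2 * h2 ≤ 0 := by linarith
          have hch' : (0:ℝ) ≤ c^2 * h2 := mul_nonneg (sq_nonneg c) hh2
          have hc2 : c^2 = 0 :=
            (mul_eq_zero.1 (le_antisymm hch hch')).resolve_right (ne_of_gt hh0)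
          have hDz : D = 0 := by rw [hD, hc2, ← h, mul_zero, add_zero]
          rw [hDz] at hD0
          exact lt_irrefl 0 hD0
        · exact h
      -- combine: h2 * D^2 ≤ D' * (1+ε) * g2 * D; (1-ε) g2 ≤ h2
      have hfin : D ≤ (1+ε)/(1-ε) * D' := by
        rw [div_mul_eq_mul_div, le_div_iff₀ h1ε]
        have h1 : h2 * D^2 ≤ D' * ((1+ε) * (g2 * D)) := by
          calc h2 * D^2 = (sh * D)^2 := by rw [mul_pow, hsh2]
            _ ≤ D' * (y ⬝ᵥ y + c^2 * h2) := hmain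
            _ ≤ D' * ((1+ε) * (g2 * D)) := by
                apply mul_le_mul_of_nonneg_left hF'X hD'nn
        have e1 := mul_le_mul_of_nonneg_right hgh (sq_nonneg D)
        have hgD : 0 < g2 * D := mul_pos hg0 hD0
        refine (mul_le_mul_iff_of_pos_right hgD).1 ?_
        linarith [e1, h1]
      calc Real.sqrt D ≤ Real.sqrt ((1+ε)/(1-ε) * D') := Real.sqrt_le_sqrt hfin
        _ = Real.sqrt ((1+ε)/(1-ε)) * Real.sqrt D' := Real.sqrt_mul hKnn D'

lemma orth_dot {N : ℕ} (Q : Matrix (Fin N) (Fin N) ℝ) (h : Qᵀ * Q = 1) (y : Fin N → ℝ) :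
    (Q *ᵥ y) ⬝ᵥ (Q *ᵥ y) = y ⬝ᵥ y := by
  rw [Matrix.dotProduct_mulVec]
  have h2 : (Q *ᵥ y) ᵥ* Q = y := by
    rw [← Matrix.vecMul_transpose, Matrix.vecMul_vecMul, h, Matrix.vecMul_one]
  rw [h2]

lemma block_dot {k m' n' : ℕ} (R11 : Matrix (Fin k) (Fin k) ℝ) (R12 : Matrix (Fin k) (Fin n') ℝ)
    (R22 : Matrix (Fin m') (Fin n') ℝ) (v : Fin k → ℝ) (u : Fin n' → ℝ) :
    ((Matrix.reindex finSumFinEquiv finSumFinEquiv (Matrix.fromBlocks R11 R12 0 R22)) *ᵥ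
        (fun r => Sum.elim v u (finSumFinEquiv.symm r))) ⬝ᵥ
      ((Matrix.reindex finSumFinEquiv finSumFinEquiv (Matrix.fromBlocks R11 R12 0 R22)) *ᵥ
        (fun r => Sum.elim v u (finSumFinEquiv.symm r)))
    = (R11 *ᵥ v + R12 *ᵥ u) ⬝ᵥ (R11 *ᵥ v + R12 *ᵥ u) + (R22 *ᵥ u) ⬝ᵥ (R22 *ᵥ u) := by
  have h1 : (Matrix.reindex finSumFinEquiv finSumFinEquiv (Matrix.fromBlocks R11 R12 0 R22)) *ᵥ
      (fun r => Sum.elim v u (finSumFinEquiv.symm r)) =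
      ((Matrix.fromBlocks R11 R12 0 R22) *ᵥ (Sum.elim v u)) ∘ finSumFinEquiv.symm := by
    rw [Matrix.reindex_apply]
    rw [Matrix.submatrix_mulVec_equiv (Matrix.fromBlocks R11 R12 0 R22)
      (fun r => Sum.elim v u (finSumFinEquiv.symm r)) (⇑finSumFinEquiv.symm) finSumFinEquiv.symm]
    have hv : ((fun r => Sum.elim v u (finSumFinEquiv.symm r)) ∘ ⇑finSumFinEquiv) =
        Sum.elim v u := by
      funext s; simp
    simp only [Equiv.symm_symm]
    rw [hv]
  rw [h1]
  have h2 : ((Matrix.fromBlocks R11 R12 0 R22) *ᵥ (Sum.elim v u)) =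
      Sum.elim (R11 *ᵥ v + R12 *ᵥ u) (R22 *ᵥ u) := by
    rw [Matrix.fromBlocks_mulVec]
    simp
  rw [h2]
  unfold dotProduct
  simp only [Function.comp]
  rw [Equiv.sum_comp (finSumFinEquiv.symm)
    (fun s => Sum.elim (R11 *ᵥ v + R12 *ᵥ u) (R22 *ᵥ u) s * Sum.elim (R11 *ᵥ v + R12 *ᵥ u) (R22 *ᵥ u) s)]
  rw [Fintype.sum_sum_type]
  rfl

lemma rho_nonneg {k m' n' : ℕ} (R11 : Matrix (Fin k) (Fin k) ℝ)
    (R12 : Matrix (Fin k) (Fin n') ℝ) (R22 : Matrix (Fin m') (Fin n') ℝ) :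
    0 ≤ rho R11 R12 R22 := by
  unfold rho
  rcases isEmpty_or_nonempty (Fin k) with hk | hk
  · rw [Real.iSup_of_isEmpty]
  rcases isEmpty_or_nonempty (Fin n') with hn | hn
  · have : ∀ i : Fin k, (⨆ j : Fin n', Real.sqrt (((R11⁻¹ * R12) i j) ^ 2 +
        (omega_ R11 i) ^ 2 * (gamma_ R22 j) ^ 2)) = 0 := fun i => Real.iSup_of_isEmpty _
    simp only [this]
    rw [ciSup_const]
  obtain ⟨i⟩ := hk
  obtain ⟨j⟩ := hn
  have h1 : (0:ℝ) ≤ Real.sqrt (((R11⁻¹ * R12) i j) ^ 2 +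
      (omega_ R11 i) ^ 2 * (gamma_ R22 j) ^ 2) := Real.sqrt_nonneg _
  have h2 : Real.sqrt (((R11⁻¹ * R12) i j) ^ 2 + (omega_ R11 i) ^ 2 * (gamma_ R22 j) ^ 2) ≤
      ⨆ j' : Fin n', Real.sqrt (((R11⁻¹ * R12) i j') ^ 2 +
        (omega_ R11 i) ^ 2 * (gamma_ R22 j') ^ 2) :=
    le_ciSup (f := fun j' : Fin n' => Real.sqrt (((R11⁻¹ * R12) i j') ^ 2 +
      (omega_ R11 i) ^ 2 * (gamma_ R22 j') ^ 2)) (Finite.bddAbove_range _) j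
  have h3 : (⨆ j' : Fin n', Real.sqrt (((R11⁻¹ * R12) i j') ^ 2 +
      (omega_ R11 i) ^ 2 * (gamma_ R22 j') ^ 2)) ≤
      ⨆ i' : Fin k, ⨆ j' : Fin n', Real.sqrt (((R11⁻¹ * R12) i' j') ^ 2 +
        (omega_ R11 i') ^ 2 * (gamma_ R22 j') ^ 2) :=
    le_ciSup (f := fun i' : Fin k => ⨆ j' : Fin n', Real.sqrt (((R11⁻¹ * R12) i' j') ^ 2 +
      (omega_ R11 i') ^ 2 * (gamma_ R22 j') ^ 2)) (Finite.bddAbove_range _) i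
  linarith

/-- `ρ(R,k) ≤ √((1+ε)/(1−ε))·ρ(R^sk,k)` when `Ω` embeds `range(M)`. -/
theorem stmt_11 {d' k m' n' : ℕ} (ε : ℝ) (hε0 : 0 < ε) (hε1 : ε < 1)
    (M : Matrix (Fin (k + m')) (Fin (k + n')) ℝ)
    (Ω : Matrix (Fin (k + d')) (Fin (k + m')) ℝ)
    (hΩ : IsEmbedding ε Ω (LinearMap.range M.mulVecLin))
    (Pi : Matrix (Fin (k + n')) (Fin (k + n')) ℝ) (hPi : IsPermMatrix Pi)
    (hk : 1 ≤ k)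
    (hind : LinearIndependent ℝ (fun i : Fin k => fun r => (M * Pi) r (Fin.castAdd n' i)))
    (Q : Matrix (Fin (k + m')) (Fin (k + m')) ℝ)
    (R11 : Matrix (Fin k) (Fin k) ℝ) (R12 : Matrix (Fin k) (Fin n') ℝ)
    (R22 : Matrix (Fin m') (Fin n') ℝ)
    (hQR : PartialQR (M * Pi) Q R11 R12 R22) (hR11 : IsUnit R11.det)
    (Qsk : Matrix (Fin (k + d')) (Fin (k + d')) ℝ)
    (R11sk : Matrix (Fin k) (Fin k) ℝ) (R12sk : Matrix (Fin k) (Fin n') ℝ)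
    (R22sk : Matrix (Fin d') (Fin n') ℝ)
    (hQRsk : PartialQR (Ω * (M * Pi)) Qsk R11sk R12sk R22sk) (hR11sk : IsUnit R11sk.det) :
    rho R11 R12 R22 ≤ Real.sqrt ((1 + ε) / (1 - ε)) * rho R11sk R12sk R22sk := by
  obtain ⟨hQo, hQtri, hQeq⟩ := hQR
  obtain ⟨hQo', hQtri', hQeq'⟩ := hQRsk
  have hEmb : ∀ (v : Fin k → ℝ) (u : Fin n' → ℝ),
      |((R11sk *ᵥ v + R12sk *ᵥ u) ⬝ᵥ (R11sk *ᵥ v + R12sk *ᵥ u) +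
          (R22sk *ᵥ u) ⬝ᵥ (R22sk *ᵥ u)) -
        ((R11 *ᵥ v + R12 *ᵥ u) ⬝ᵥ (R11 *ᵥ v + R12 *ᵥ u) + (R22 *ᵥ u) ⬝ᵥ (R22 *ᵥ u))| ≤
        ε * ((R11 *ᵥ v + R12 *ᵥ u) ⬝ᵥ (R11 *ᵥ v + R12 *ᵥ u) + (R22 *ᵥ u) ⬝ᵥ (R22 *ᵥ u)) := by
    intro v u
    set w : Fin (k + n') → ℝ := fun r => Sum.elim v u (finSumFinEquiv.symm r) with hw
    set x : Fin (k + m') → ℝ := (M * Pi) *ᵥ w with hx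
    have hxmem : x ∈ LinearMap.range M.mulVecLin := ⟨Pi *ᵥ w, by
      rw [Matrix.mulVecLin_apply, Matrix.mulVec_mulVec]⟩
    have hemb := hΩ x hxmem x hxmem
    have hx2 : x ⬝ᵥ x = (R11 *ᵥ v + R12 *ᵥ u) ⬝ᵥ (R11 *ᵥ v + R12 *ᵥ u) +
        (R22 *ᵥ u) ⬝ᵥ (R22 *ᵥ u) := by
      rw [hx, hQeq, ← Matrix.mulVec_mulVec, orth_dot Q hQo, block_dot]
    have hox : Ω *ᵥ x = (Ω * (M * Pi)) *ᵥ w := by rw [hx, Matrix.mulVec_mulVec]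
    have hox2 : (Ω *ᵥ x) ⬝ᵥ (Ω *ᵥ x) = (R11sk *ᵥ v + R12sk *ᵥ u) ⬝ᵥ
        (R11sk *ᵥ v + R12sk *ᵥ u) + (R22sk *ᵥ u) ⬝ᵥ (R22sk *ᵥ u) := by
      rw [hox, hQeq', ← Matrix.mulVec_mulVec, orth_dot Qsk hQo', block_dot]
    have hn2 : ε * norm2 x * norm2 x = ε * (x ⬝ᵥ x) := by
      rw [mul_assoc, norm2, Real.mul_self_sqrt (dot_self_nonneg' x)]
    rw [hn2, hx2, hox2] at hemb
    exact hemb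
  have hij : ∀ (i : Fin k) (j : Fin n'),
      Real.sqrt (((R11⁻¹ * R12) i j) ^ 2 + (omega_ R11 i) ^ 2 * (gamma_ R22 j) ^ 2) ≤
        Real.sqrt ((1+ε)/(1-ε)) *
        Real.sqrt (((R11sk⁻¹ * R12sk) i j) ^ 2 +
          (omega_ R11sk i) ^ 2 * (gamma_ R22sk j) ^ 2) := by
    intro i j
    have hg2 : (gamma_ R22 j)^2 = (fun l => R22 l j) ⬝ᵥ (fun l => R22 l j) :=
      Real.sq_sqrt (dot_self_nonneg' _)
    have hh2g : (gamma_ R22sk j)^2 = (fun l => R22sk l j) ⬝ᵥ (fun l => R22sk l j) :=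
      Real.sq_sqrt (dot_self_nonneg' _)
    have hwo : (omega_ R11 i)^2 = (fun l => R11⁻¹ i l) ⬝ᵥ (fun l => R11⁻¹ i l) :=
      Real.sq_sqrt (dot_self_nonneg' _)
    have hwo' : (omega_ R11sk i)^2 = (fun l => R11sk⁻¹ i l) ⬝ᵥ (fun l => R11sk⁻¹ i l) :=
      Real.sq_sqrt (dot_self_nonneg' _)
    have hcc : (R11⁻¹ * R12) i j = (R11⁻¹ *ᵥ (fun l => R12 l j)) i := by
      simp [Matrix.mul_apply, Matrix.mulVec, dotProduct]
    have hcc' : (R11sk⁻¹ * R12sk) i j = (R11sk⁻¹ *ᵥ (fun l => R12sk l j)) i := by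
      simp [Matrix.mul_apply, Matrix.mulVec, dotProduct]
    rw [hg2, hh2g, hwo, hwo', hcc, hcc']
    apply core hε0 hε1 R11 R11sk hR11 hR11sk (fun l => R12 l j) (fun l => R12sk l j)
      _ _ (dot_self_nonneg' _) (dot_self_nonneg' _) _ i
    intro v t
    have h1 : R12 *ᵥ (t • (_root_.Pi.single j (1:ℝ) : Fin n' → ℝ)) = t • (fun l => R12 l j) := by
      rw [Matrix.mulVec_smul, Matrix.mulVec_single]
      funext l; simp
    have h1' : R12sk *ᵥ (t • (_root_.Pi.single j (1:ℝ) : Fin n' → ℝ)) = t • (fun l => R12sk l j) := by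
      rw [Matrix.mulVec_smul, Matrix.mulVec_single]
      funext l; simp
    have h2 : (R22 *ᵥ (t • (_root_.Pi.single j (1:ℝ) : Fin n' → ℝ))) ⬝ᵥ (R22 *ᵥ (t • (_root_.Pi.single j (1:ℝ) : Fin n' → ℝ))) =
        t^2 * ((fun l => R22 l j) ⬝ᵥ (fun l => R22 l j)) := by
      rw [Matrix.mulVec_smul, Matrix.mulVec_single, smul_dotProduct,
        dotProduct_smul]
      simp only [smul_eq_mul, mul_one]
      ring_nf
      simp only [MulOpposite.op_one, one_smul, Matrix.col]
      rfl
    have h2' : (R22sk *ᵥ (t • (_root_.Pi.single j (1:ℝ) : Fin n' → ℝ))) ⬝ᵥ (R22sk *ᵥ (t • (_root_.Pi.single j (1:ℝ) : Fin n' → ℝ))) =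
        t^2 * ((fun l => R22sk l j) ⬝ᵥ (fun l => R22sk l j)) := by
      rw [Matrix.mulVec_smul, Matrix.mulVec_single, smul_dotProduct,
        dotProduct_smul]
      simp only [smul_eq_mul, mul_one]
      ring_nf
      simp only [MulOpposite.op_one, one_smul, Matrix.col]
      rfl
    have hA := hEmb v (t • (_root_.Pi.single j (1:ℝ) : Fin n' → ℝ))
    rw [h1, h1', h2, h2'] at hA
    exact hA
  -- assemble the suprema
  have hK0 : (0:ℝ) ≤ Real.sqrt ((1+ε)/(1-ε)) := Real.sqrt_nonneg _
  have hB : (0:ℝ) ≤ Real.sqrt ((1+ε)/(1-ε)) * rho R11sk R12sk R22sk :=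
    mul_nonneg hK0 (rho_nonneg _ _ _)
  haveI hNk : Nonempty (Fin k) := ⟨⟨0, hk⟩⟩
  have hsup : ∀ (i : Fin k) (j : Fin n'),
      Real.sqrt (((R11sk⁻¹ * R12sk) i j) ^ 2 +
        (omega_ R11sk i) ^ 2 * (gamma_ R22sk j) ^ 2) ≤ rho R11sk R12sk R22sk := by
    intro i j
    unfold rho
    have h2 : Real.sqrt (((R11sk⁻¹ * R12sk) i j) ^ 2 +
        (omega_ R11sk i) ^ 2 * (gamma_ R22sk j) ^ 2) ≤
        ⨆ j' : Fin n', Real.sqrt (((R11sk⁻¹ * R12sk) i j') ^ 2 +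
          (omega_ R11sk i) ^ 2 * (gamma_ R22sk j') ^ 2) :=
      le_ciSup (f := fun j' : Fin n' => Real.sqrt (((R11sk⁻¹ * R12sk) i j') ^ 2 +
        (omega_ R11sk i) ^ 2 * (gamma_ R22sk j') ^ 2)) (Finite.bddAbove_range _) j
    have h3 : (⨆ j' : Fin n', Real.sqrt (((R11sk⁻¹ * R12sk) i j') ^ 2 +
        (omega_ R11sk i) ^ 2 * (gamma_ R22sk j') ^ 2)) ≤
        ⨆ i' : Fin k, ⨆ j' : Fin n', Real.sqrt (((R11sk⁻¹ * R12sk) i' j') ^ 2 +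
          (omega_ R11sk i') ^ 2 * (gamma_ R22sk j') ^ 2) :=
      le_ciSup (f := fun i' : Fin k => ⨆ j' : Fin n',
        Real.sqrt (((R11sk⁻¹ * R12sk) i' j') ^ 2 +
          (omega_ R11sk i') ^ 2 * (gamma_ R22sk j') ^ 2)) (Finite.bddAbove_range _) i
    linarith
  rw [show rho R11 R12 R22 = ⨆ i : Fin k, ⨆ j : Fin n',
      Real.sqrt (((R11⁻¹ * R12) i j) ^ 2 + (omega_ R11 i) ^ 2 * (gamma_ R22 j) ^ 2) from rfl]
  apply ciSup_le
  intro i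
  rcases isEmpty_or_nonempty (Fin n') with hn | hn
  · rw [Real.iSup_of_isEmpty]; exact hB
  apply ciSup_le
  intro j
  calc Real.sqrt (((R11⁻¹ * R12) i j) ^ 2 + (omega_ R11 i) ^ 2 * (gamma_ R22 j) ^ 2) ≤
      Real.sqrt ((1+ε)/(1-ε)) * Real.sqrt (((R11sk⁻¹ * R12sk) i j) ^ 2 +
        (omega_ R11sk i) ^ 2 * (gamma_ R22sk j) ^ 2) := hij i j
    _ ≤ Real.sqrt ((1+ε)/(1-ε)) * rho R11sk R12sk R22sk :=
        mul_le_mul_of_nonneg_left (hsup i j) hK0
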